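/- Let H be a separable infinite-dimensional complex Hilbert space, M a nontrivial closed subspace of H, and (T_n)_{n≥1} a sequence of bounded linear operators on H. Suppose there exist subsets X and Y, both dense in M, and a strictly increasing sequence (n_k)_{k≥1} of positive integers such that: (i) T_{n_k} x → 0 as k → ∞ for all x ∈ X; (ii) for every y ∈ Y there exist a sequence (x_k) in M and α ∈ ℂ with 0 < |α| ≤ 1 such that x_k → 0 and α • T_{n_k} x_k → y; (iii) T_{n_k}(M) ⊆ M for each k ∈ ℕ. Then (T_n) is subspace-disk topologically transitive with respect to M, and hence (T_n) is subspace-diskcyclic with respect to M. -/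

import Mathlib

open Pointwise Filter Topology

/-- A subset `S` of a Hilbert space is relatively open in the subspace `M`. -/
def RelOpenIn {H : Type*} [NormedAddCommGroup H] [InnerProductSpace ℂ H]
    (M : Submodule ℂ H) (S : Set H) : Prop :=
  IsOpen ((↑) ⁻¹' S : Set ↥M)

/-- `(T n)` is subspace-disk topologically transitive with respect to `M`. -/
def SubspaceDiskTransitive {H : Type*} [NormedAddCommGroup H] [InnerProductSpace ℂ H]
    (T : ℕ → H →L[ℂ] H) (M : Submodule ℂ H) : Prop :=
  ∀ U V : Set H, U ⊆ M → V ⊆ M → U.Nonempty → V.Nonempty →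
    RelOpenIn M U → RelOpenIn M V →
    ∃ (n : ℕ) (α : ℂ), 1 ≤ ‖α‖ ∧
      ∃ W : Set H, W ⊆ M ∧ W.Nonempty ∧ RelOpenIn M W ∧ W ⊆ (T n) ⁻¹' (α • U) ∩ V

/-- `(T n)` is subspace-diskcyclic with respect to `M`. -/
def SubspaceDiskcyclic {H : Type*} [NormedAddCommGroup H] [InnerProductSpace ℂ H]
    (T : ℕ → H →L[ℂ] H) (M : Submodule ℂ H) : Prop :=
  ∃ x : H, (M : Set H) ⊆
    closure ({y : H | ∃ (n : ℕ) (α : ℂ), 0 < ‖α‖ ∧ ‖α‖ ≤ 1 ∧ y = α • T n x} ∩ M)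

/-!
If `U` meets `Y` in `y` and `V` meets `X` in `x`, take `u_k → 0` and `α` from the criterion for
`y`: then `x + u_k ∈ V` eventually, while `α • T_{n_k} (x + u_k) = α • T_{n_k} x + α • T_{n_k} u_k`
tends to `0 + y`, so lies in `U` eventually. Thus the maps `x ↦ α • T_{n_k} x` with
`0 < ‖α‖ ≤ 1`, restricted to the invariant subspace `M`, form a topologically transitive family,
which gives subspace-disk transitivity. Since `M` is a complete separable metric space, the Baire
category theorem turns this transitivity into a point of `M` whose disk orbit is dense in `M`.
-/

open Set

section Transitivity

variable {Z ι : Type*} [TopologicalSpace Z]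

def TopologicallyTransitive (f : ι → Z → Z) : Prop :=
  ∀ U V : Set Z, IsOpen U → IsOpen V → U.Nonempty → V.Nonempty → ∃ i, (V ∩ f i ⁻¹' U).Nonempty

theorem TopologicallyTransitive.exists_denseRange [BaireSpace Z] [SecondCountableTopology Z]
    [Nonempty Z] {f : ι → Z → Z} (hf : ∀ i, Continuous (f i)) (htrans : TopologicallyTransitive f) :
    ∃ z, DenseRange fun i => f i z := by
  obtain ⟨b, hbc, hb_empty, hb⟩ := TopologicalSpace.exists_countable_basis Z
  have hopen : ∀ s ∈ b, IsOpen (⋃ i, f i ⁻¹' s) := fun s hs =>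
    isOpen_iUnion fun i => (hb.isOpen hs).preimage (hf i)
  have hdense : ∀ s ∈ b, Dense (⋃ i, f i ⁻¹' s) := by
    intro s hs
    refine dense_iff_inter_open.mpr fun V hV hVne => ?_
    have hsne : s.Nonempty := nonempty_iff_ne_empty.mpr fun h => hb_empty (h ▸ hs)
    obtain ⟨i, hi⟩ := htrans s V (hb.isOpen hs) hV hsne hVne
    exact hi.mono (inter_subset_inter_right _ (subset_iUnion (fun i => f i ⁻¹' s) i))
  obtain ⟨z, hz⟩ := (dense_biInter_of_isOpen hopen hbc hdense).nonempty
  refine ⟨z, hb.dense_iff.mpr fun s hs _ => ?_⟩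
  obtain ⟨i, hi⟩ := mem_iUnion.mp (mem_iInter₂.mp hz s hs)
  exact ⟨f i z, hi, i, rfl⟩

end Transitivity

theorem dense_preimage_val_of_subset_closure {Z : Type*} [TopologicalSpace Z] {M X : Set Z}
    (hXM : X ⊆ M) (hX : M ⊆ closure X) : Dense ((↑) ⁻¹' X : Set M) := by
  rwa [Subtype.dense_iff, Subtype.image_preimage_coe, inter_eq_right.mpr hXM]

section DiskScaled

variable {𝕜 E : Type*} [NormedField 𝕜] [AddCommGroup E] [Module 𝕜 E]

def diskScaled (S : ℕ → E → E) : ℕ × {α : 𝕜 // 0 < ‖α‖ ∧ ‖α‖ ≤ 1} → E → E :=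
  fun i x => (i.2 : 𝕜) • S i.1 x

variable [TopologicalSpace E]

theorem continuous_diskScaled [ContinuousConstSMul 𝕜 E] {S : ℕ → E → E}
    (hS : ∀ k, Continuous (S k)) (i : ℕ × {α : 𝕜 // 0 < ‖α‖ ∧ ‖α‖ ≤ 1}) :
    Continuous (diskScaled S i) :=
  (hS i.1).const_smul _

theorem topologicallyTransitive_diskScaled [ContinuousAdd E] [ContinuousConstSMul 𝕜 E]
    (S : ℕ → E →ₗ[𝕜] E) {X Y : Set E} (hX : Dense X) (hY : Dense Y)
    (h1 : ∀ x ∈ X, Tendsto (fun k => S k x) atTop (𝓝 0))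
    (h2 : ∀ y ∈ Y, ∃ (u : ℕ → E) (α : 𝕜), 0 < ‖α‖ ∧ ‖α‖ ≤ 1 ∧ Tendsto u atTop (𝓝 0) ∧
      Tendsto (fun k => α • S k (u k)) atTop (𝓝 y)) :
    TopologicallyTransitive (diskScaled (𝕜 := 𝕜) fun k => S k) := by
  intro U V hU hV hUne hVne
  obtain ⟨y, hyU, hyY⟩ := hY.inter_open_nonempty U hU hUne
  obtain ⟨x, hxV, hxX⟩ := hX.inter_open_nonempty V hV hVne
  obtain ⟨u, α, hα0, hα1, hu, hSu⟩ := h2 y hyY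
  have hxu : Tendsto (fun k => x + u k) atTop (𝓝 x) := by
    simpa using tendsto_const_nhds.add hu
  have hSxu : Tendsto (fun k => α • S k (x + u k)) atTop (𝓝 y) := by
    simpa [smul_add] using ((h1 x hxX).const_smul α).add hSu
  obtain ⟨k, hkV, hkU⟩ :=
    ((hxu.eventually (hV.mem_nhds hxV)).and (hSxu.eventually (hU.mem_nhds hyU))).exists
  exact ⟨(k, ⟨α, hα0, hα1⟩), x + u k, hkV, hkU⟩

end DiskScaled

section Subspace

variable {H : Type*} [NormedAddCommGroup H] [InnerProductSpace ℂ H]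

theorem relOpenIn_image_val {M : Submodule ℂ H} {s : Set M} :
    RelOpenIn M ((↑) '' s) ↔ IsOpen s := by
  rw [RelOpenIn, preimage_image_eq _ Subtype.val_injective]

variable {T : ℕ → H →L[ℂ] H} {M : Submodule ℂ H} {n : ℕ → ℕ} {S : ℕ → M →L[ℂ] M}

theorem subspaceDiskTransitive_of_restrict (hS : ∀ k (x : M), (S k x : H) = T (n k) x)
    (htrans : TopologicallyTransitive (diskScaled (𝕜 := ℂ) fun k => S k)) :
    SubspaceDiskTransitive T M := by
  intro U V hUM hVM ⟨u, hu⟩ ⟨v, hv⟩ hU hV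
  obtain ⟨⟨k, α, hα0, hα1⟩, hne⟩ := htrans _ _ hU hV ⟨⟨u, hUM hu⟩, hu⟩ ⟨⟨v, hVM hv⟩, hv⟩
  have hα : α ≠ 0 := norm_pos_iff.mp hα0
  refine ⟨n k, α⁻¹, by rwa [norm_inv, one_le_inv₀ hα0], _, ?_, hne.image _,
    relOpenIn_image_val.mpr (hV.inter (hU.preimage
      (continuous_diskScaled (fun k => (S k).continuous) _))), ?_⟩
  · rintro _ ⟨x, -, rfl⟩
    exact x.2
  · rintro _ ⟨x, ⟨hxV, hxU⟩, rfl⟩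
    refine ⟨(mem_inv_smul_set_iff₀ hα _ _).mpr ?_, hxV⟩
    simpa [diskScaled, hS] using hxU

theorem subspaceDiskcyclic_of_restrict [CompleteSpace H] [TopologicalSpace.SeparableSpace H]
    (hMc : IsClosed (M : Set H)) (hS : ∀ k (x : M), (S k x : H) = T (n k) x)
    (htrans : TopologicallyTransitive (diskScaled (𝕜 := ℂ) fun k => S k)) :
    SubspaceDiskcyclic T M := by
  have : CompleteSpace M := hMc.completeSpace_coe
  have : SecondCountableTopology H := UniformSpace.secondCountable_of_separable H
  obtain ⟨z, hz⟩ :=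
    htrans.exists_denseRange (continuous_diskScaled fun k => (S k).continuous)
  refine ⟨z, (Subtype.dense_iff.mp hz).trans (closure_mono ?_)⟩
  rintro _ ⟨_, ⟨⟨k, α, hα0, hα1⟩, rfl⟩, rfl⟩
  exact ⟨⟨n k, α, hα0, hα1, by simp [diskScaled, hS]⟩, Submodule.coe_mem _⟩

end Subspace

theorem subspaceDiskTransitive_of_criterion_general
    {H : Type*} [NormedAddCommGroup H] [InnerProductSpace ℂ H] [CompleteSpace H]
    [TopologicalSpace.SeparableSpace H]
    (M : Submodule ℂ H) (hMc : IsClosed (M : Set H))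
    (T : ℕ → H →L[ℂ] H) (X Y : Set H) (hXM : X ⊆ M) (hYM : Y ⊆ M)
    (hX : (M : Set H) ⊆ closure X) (hY : (M : Set H) ⊆ closure Y)
    (nseq : ℕ → ℕ)
    (h1 : ∀ x ∈ X, Tendsto (fun k => T (nseq k) x) atTop (nhds 0))
    (h2 : ∀ y ∈ Y, ∃ (u : ℕ → H) (α : ℂ), 0 < ‖α‖ ∧ ‖α‖ ≤ 1 ∧ (∀ k, u k ∈ M) ∧
      Tendsto u atTop (nhds 0) ∧
      Tendsto (fun k => α • T (nseq k) (u k)) atTop (nhds y))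
    (h3 : ∀ k, (T (nseq k)) '' M ⊆ M) :
    SubspaceDiskTransitive T M ∧ SubspaceDiskcyclic T M := by
  set S : ℕ → M →L[ℂ] M := fun k => (T (nseq k)).restrict (image_subset_iff.mp (h3 k))
  have hS : ∀ k (x : M), (S k x : H) = T (nseq k) x := fun _ _ => rfl
  have h1' : ∀ x ∈ ((↑) ⁻¹' X : Set M), Tendsto (fun k => S k x) atTop (𝓝 0) :=
    fun x hx => tendsto_subtype_rng.mpr (h1 x hx)
  have h2' : ∀ y ∈ ((↑) ⁻¹' Y : Set M), ∃ (u : ℕ → M) (α : ℂ), 0 < ‖α‖ ∧ ‖α‖ ≤ 1 ∧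
      Tendsto u atTop (𝓝 0) ∧ Tendsto (fun k => α • S k (u k)) atTop (𝓝 y) := by
    intro y hy
    obtain ⟨u, α, hα0, hα1, huM, hu, hSu⟩ := h2 y hy
    exact ⟨fun k => ⟨u k, huM k⟩, α, hα0, hα1, tendsto_subtype_rng.mpr hu,
      tendsto_subtype_rng.mpr hSu⟩
  have htrans : TopologicallyTransitive (diskScaled (𝕜 := ℂ) fun k => S k) :=
    topologicallyTransitive_diskScaled (fun k => (S k : M →ₗ[ℂ] M))
      (dense_preimage_val_of_subset_closure hXM hX)
      (dense_preimage_val_of_subset_closure hYM hY) h1' h2'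
  exact ⟨subspaceDiskTransitive_of_restrict hS htrans,
    subspaceDiskcyclic_of_restrict hMc hS htrans⟩

/-- a subspace-diskcyclicity criterion. -/
theorem subspaceDiskTransitive_of_criterion
    {H : Type*} [NormedAddCommGroup H] [InnerProductSpace ℂ H] [CompleteSpace H]
    [TopologicalSpace.SeparableSpace H] (hinf : ¬ FiniteDimensional ℂ H)
    (M : Submodule ℂ H) (hMc : IsClosed (M : Set H)) (hM₁ : M ≠ ⊥) (hM₂ : M ≠ ⊤)
    (T : ℕ → H →L[ℂ] H) (X Y : Set H) (hXM : X ⊆ M) (hYM : Y ⊆ M)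
    (hX : (M : Set H) ⊆ closure X) (hY : (M : Set H) ⊆ closure Y)
    (nseq : ℕ → ℕ) (hmono : StrictMono nseq) (hpos : ∀ k, 0 < nseq k)
    (h1 : ∀ x ∈ X, Tendsto (fun k => T (nseq k) x) atTop (nhds 0))
    (h2 : ∀ y ∈ Y, ∃ (u : ℕ → H) (α : ℂ), 0 < ‖α‖ ∧ ‖α‖ ≤ 1 ∧ (∀ k, u k ∈ M) ∧
      Tendsto u atTop (nhds 0) ∧
      Tendsto (fun k => α • T (nseq k) (u k)) atTop (nhds y))
    (h3 : ∀ k, (T (nseq k)) '' M ⊆ M) :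
    SubspaceDiskTransitive T M ∧ SubspaceDiskcyclic T M :=
  subspaceDiskTransitive_of_criterion_general M hMc T X Y hXM hYM hX hY nseq h1 h2 h3
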